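/- arXiv:2212.03938 — 4 statements merged into one kernel-verified Lean document; each statement's English description precedes it below -/
import Mathlib

section
/- The second group cohomology of ℤ×ℤ with trivial coefficients in ℤ/2 is isomorphic to ℤ/2, i.e., the quotient of (abelian-valued) 2-cocycles on ℤ×ℤ valued in ℤ/2 by coboundaries is a group of order 2. -/
/-- The additive group of 2-cocycles on ℤ×ℤ with values in ℤ/2 (trivial action). -/
def cocycles : AddSubgroup (((ℤ × ℤ) × (ℤ × ℤ)) → ZMod 2) where
  carrier := {α | ∀ a b c : ℤ × ℤ, α (a + b, c) + α (a, b) = α (b, c) + α (a, b + c)}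
  add_mem' := by
    intro α β hα hβ a b c
    have h1 := hα a b c
    have h2 := hβ a b c
    simp only [Pi.add_apply]
    linear_combination h1 + h2
  zero_mem' := by intro a b c; simp
  neg_mem' := by
    intro α hα a b c
    have h1 := hα a b c
    simp only [Pi.neg_apply]
    linear_combination -h1

/-- The additive group of 2-coboundaries on ℤ×ℤ with values in ℤ/2. -/
def coboundaries : AddSubgroup (((ℤ × ℤ) × (ℤ × ℤ)) → ZMod 2) where
  carrier := {α | ∃ β : ℤ × ℤ → ZMod 2, ∀ a b : ℤ × ℤ, α (a, b) = β a + β b - β (a + b)}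
  add_mem' := by
    rintro α γ ⟨β₁, h₁⟩ ⟨β₂, h₂⟩
    refine ⟨β₁ + β₂, fun a b => ?_⟩
    simp only [Pi.add_apply, h₁ a b, h₂ a b]
    ring
  zero_mem' := ⟨0, by intro a b; simp⟩
  neg_mem' := by
    rintro α ⟨β, h⟩
    refine ⟨-β, fun a b => ?_⟩
    simp only [Pi.neg_apply, h a b]
    ring

/-!
A 2-cocycle `α` on `G` with values in `M` defines the extension `M × G` with addition
`(m, g) + (m', g') = (m + m' + α (g, g'), g + g')`, associative precisely because of the cocycle
identity, and `α` is a coboundary as soon as this extension has an additive section. For `G = ℤ × ℤ`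
such a section exists once lifts of the two generators commute, i.e. once
`α (e₁, e₂) = α (e₂, e₁)`. So `α ↦ α (e₁, e₂) - α (e₂, e₁)` vanishes exactly on coboundaries, and
it is onto because the bilinear cocycle `(a, b) ↦ a₁ b₂ • z` takes the value `z`.
-/

section

variable {G M : Type*} [AddGroup G] [AddCommGroup M]

def IsTwoCocycle (α : G × G → M) : Prop :=
  ∀ a b c : G, α (a + b, c) + α (a, b) = α (b, c) + α (a, b + c)

def IsTwoCoboundary (α : G × G → M) : Prop :=
  ∃ β : G → M, ∀ a b : G, α (a, b) = β a + β b - β (a + b)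

theorem IsTwoCocycle.apply_zero_left {α : G × G → M} (hα : IsTwoCocycle α) (g : G) :
    α (0, g) = α (0, 0) := by
  simpa using (hα 0 0 g).symm

@[ext]
structure CocycleExtension (α : G × G → M) where
  fiber : M
  base : G

namespace CocycleExtension

variable {α : G × G → M}

instance : Add (CocycleExtension α) :=
  ⟨fun x y => ⟨x.fiber + y.fiber + α (x.base, y.base), x.base + y.base⟩⟩

instance : Zero (CocycleExtension α) := ⟨⟨-α (0, 0), 0⟩⟩

instance : Neg (CocycleExtension α) := ⟨fun x => ⟨-x.fiber - α (-x.base, x.base) - α (0, 0), -x.base⟩⟩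

@[simp] theorem fiber_add (x y : CocycleExtension α) :
    (x + y).fiber = x.fiber + y.fiber + α (x.base, y.base) := rfl

@[simp] theorem base_add (x y : CocycleExtension α) : (x + y).base = x.base + y.base := rfl

@[simp] theorem fiber_zero : (0 : CocycleExtension α).fiber = -α (0, 0) := rfl

@[simp] theorem base_zero : (0 : CocycleExtension α).base = 0 := rfl

@[simp] theorem fiber_neg (x : CocycleExtension α) :
    (-x).fiber = -x.fiber - α (-x.base, x.base) - α (0, 0) := rfl

@[simp] theorem base_neg (x : CocycleExtension α) : (-x).base = -x.base := rfl

abbrev addGroup (hα : IsTwoCocycle α) : AddGroup (CocycleExtension α) :=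
  AddGroup.ofLeftAxioms
    (fun x y z => by
      ext
      · simp only [fiber_add, base_add]
        linear_combination (norm := abel) hα x.base y.base z.base
      · exact add_assoc _ _ _)
    (fun x => by ext <;> simp [hα.apply_zero_left])
    (fun x => by ext <;> simp; abel)

end CocycleExtension

theorem isTwoCoboundary_of_apply_comm {α : (ℤ × ℤ) × (ℤ × ℤ) → M} (hα : IsTwoCocycle α)
    (hcomm : α ((1, 0), (0, 1)) = α ((0, 1), (1, 0))) : IsTwoCoboundary α := by
  let := CocycleExtension.addGroup hα
  let x : CocycleExtension α := ⟨0, (1, 0)⟩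
  let y : CocycleExtension α := ⟨0, (0, 1)⟩
  have hxy : AddCommute x y := CocycleExtension.ext (by simpa [x, y] using hcomm) (add_comm _ _)
  let s : ℤ × ℤ →+ CocycleExtension α :=
    (zmultiplesHom _ x).noncommCoprod (zmultiplesHom _ y) fun m n => hxy.zsmul_zsmul m n
  let π : CocycleExtension α →+ ℤ × ℤ := AddMonoidHom.mk' CocycleExtension.base fun _ _ => rfl
  have hs : ∀ g, (s g).base = g := by
    rintro ⟨m, n⟩
    change π (m • x + n • y) = (m, n)
    rw [map_add, map_zsmul, map_zsmul]
    change m • ((1, 0) : ℤ × ℤ) + n • (0, 1) = (m, n)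
    simp
  refine ⟨fun g => -(s g).fiber, fun a b => ?_⟩
  have h := congrArg CocycleExtension.fiber (s.map_add a b)
  rw [CocycleExtension.fiber_add, hs, hs] at h
  dsimp only
  rw [h]
  abel

end

theorem IsTwoCoboundary.apply_comm {G M : Type*} [AddCommGroup G] [AddCommGroup M] {α : G × G → M}
    (hα : IsTwoCoboundary α) (a b : G) : α (a, b) = α (b, a) := by
  obtain ⟨β, hβ⟩ := hα
  rw [hβ, hβ, add_comm a, add_comm (β a)]

theorem isTwoCocycle_fst_mul_snd_smul {M : Type*} [AddCommGroup M] (z : M) :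
    IsTwoCocycle fun p : (ℤ × ℤ) × (ℤ × ℤ) => (p.1.1 * p.2.2) • z := by
  intro a b c
  simp only [Prod.fst_add, Prod.snd_add, add_mul, mul_add, add_smul]
  abel

/-- Measures the failure of the lifts of `(1, 0)` and `(0, 1)` to commute in `CocycleExtension`. -/
def cocycleCommutator : cocycles →+ ZMod 2 :=
  AddMonoidHom.mk' (fun α => α.1 ((1, 0), (0, 1)) - α.1 ((0, 1), (1, 0))) fun α β => by
    simp only [AddSubgroup.coe_add, Pi.add_apply]
    abel

theorem ker_cocycleCommutator :
    cocycleCommutator.ker = coboundaries.addSubgroupOf cocycles := by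
  ext α
  rw [AddMonoidHom.mem_ker, AddSubgroup.mem_addSubgroupOf]
  exact ⟨fun h => isTwoCoboundary_of_apply_comm α.2 (sub_eq_zero.mp h),
    fun h => sub_eq_zero.mpr (IsTwoCoboundary.apply_comm h _ _)⟩

theorem cocycleCommutator_surjective : Function.Surjective cocycleCommutator := fun z =>
  ⟨⟨fun p => (p.1.1 * p.2.2) • z, isTwoCocycle_fst_mul_snd_smul z⟩, by simp [cocycleCommutator]⟩

/-- H²(ℤ×ℤ; ℤ/2) ≅ ℤ/2: the quotient of 2-cocycles by 2-coboundaries is ℤ/2. -/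
theorem stmt_3 :
    Nonempty ((cocycles ⧸ (coboundaries.addSubgroupOf cocycles)) ≃+ ZMod 2) :=
  ⟨(QuotientAddGroup.quotientAddEquivOfEq ker_cocycleCommutator.symm).trans
    (QuotientAddGroup.quotientKerEquivOfSurjective _ cocycleCommutator_surjective)⟩
end

section
/- Let R be a (ℤ×ℤ)-graded ring with central units -1 and ε satisfying ε² = 1, whose homogeneous elements satisfy x·y = y·x·(-1)^{(a₁-a₂)(b₁-b₂)}·ε^{a₂b₂} for x of degree (a₁,a₂) and y of degree (b₁,b₂). Fix a central unit u and define x ·_u y = x·y·u^{a₂(b₁-b₂)}. Then x ·_u y = y ·_u x · (-1)^{a₁b₁} · (-u)^{a₂b₁ - a₁b₂} · (-ε)^{a₂b₂}. -/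
/-!
All the twisting factors are powers of the central units `-1`, `ε`, `u`, so the claim reduces to
an identity in the commutative group `Subgroup.center Rˣ`. There it is exponent bookkeeping: the
`u`-exponents match exactly, and the `-1`-exponents only modulo `2`, which suffices since
`(-1)² = 1`.
-/

open scoped IsMulCommutative

theorem twist_commutation_factor_eq {G : Type*} [CommGroup G] {s : G} (hs : s ^ 2 = 1)
    (e u : G) (a b : ℤ × ℤ) :
    s ^ ((a.1 - a.2) * (b.1 - b.2)) * e ^ (a.2 * b.2) * u ^ (a.2 * (b.1 - b.2)) =
      u ^ (b.2 * (a.1 - a.2)) *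
        (s ^ (a.1 * b.1) * (s * u) ^ (a.2 * b.1 - a.1 * b.2) * (s * e) ^ (a.2 * b.2)) := by
  have hs_exp : s ^ ((a.1 - a.2) * (b.1 - b.2)) =
      s ^ (a.1 * b.1) * s ^ (a.2 * b.1 - a.1 * b.2) * s ^ (a.2 * b.2) := by
    have hs2 : s ^ (2 : ℤ) = 1 := by exact_mod_cast hs
    rw [← zpow_add, ← zpow_add, show (a.1 - a.2) * (b.1 - b.2) =
        a.1 * b.1 + (a.2 * b.1 - a.1 * b.2) + a.2 * b.2 + 2 * -(a.2 * b.1) by ring,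
      zpow_add s _ (2 * _), zpow_mul, hs2, one_zpow, mul_one]
  have hu_exp : u ^ (a.2 * (b.1 - b.2)) =
      u ^ (b.2 * (a.1 - a.2)) * u ^ (a.2 * b.1 - a.1 * b.2) := by
    rw [← zpow_add]
    congr 1
    ring
  rw [hs_exp, hu_exp, mul_zpow, mul_zpow]
  simp only [mul_comm, mul_assoc, mul_left_comm]

theorem stmt_5_general {R : Type*} [Ring R] (ε u : Rˣ)
    (hεc : ∀ r : R, (ε : R) * r = r * (ε : R))
    (huc : ∀ r : R, (u : R) * r = r * (u : R))
    (x y : R) (a b : ℤ × ℤ)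
    (hcomm : x * y =
      y * x * (((-1 : Rˣ) ^ ((a.1 - a.2) * (b.1 - b.2)) * ε ^ (a.2 * b.2) : Rˣ) : R)) :
    x * y * ((u ^ (a.2 * (b.1 - b.2)) : Rˣ) : R) =
      y * x * ((u ^ (b.2 * (a.1 - a.2)) : Rˣ) : R) *
        (((-1 : Rˣ) ^ (a.1 * b.1) * (-u) ^ (a.2 * b.1 - a.1 * b.2) *
          (-ε) ^ (a.2 * b.2) : Rˣ) : R) := by
  have mem_center {v : Rˣ} (hv : ∀ r : R, (v : R) * r = r * (v : R)) :
      v ∈ Subgroup.center Rˣ :=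
    Set.subset_center_units (Semigroup.mem_center_iff.mpr fun g => (hv g).symm)
  let S : Subgroup.center Rˣ := ⟨-1, mem_center fun r => by simp⟩
  have key := congrArg (Subgroup.center Rˣ).subtype <|
    twist_commutation_factor_eq (s := S) (Subtype.ext (by simp [S]))
      ⟨ε, mem_center hεc⟩ ⟨u, mem_center huc⟩ a b
  simp only [map_mul, map_zpow, Subgroup.subtype_apply, S, neg_one_mul] at key
  rw [hcomm, mul_assoc (y * x), ← Units.val_mul, key, Units.val_mul, ← mul_assoc]

/-- Commutativity formula for the u-twisted product: if x·y = y·x·(-1)^((a₁-a₂)(b₁-b₂))·ε^(a₂b₂)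
for x of degree a and y of degree b, then
x ·_u y = y ·_u x · (-1)^(a₁b₁) · (-u)^(a₂b₁-a₁b₂) · (-ε)^(a₂b₂). -/
theorem stmt_5 {R : Type*} [Ring R] (ε u : Rˣ)
    (hεc : ∀ r : R, (ε : R) * r = r * (ε : R))
    (huc : ∀ r : R, (u : R) * r = r * (u : R))
    (hε2 : ε ^ 2 = 1)
    (x y : R) (a b : ℤ × ℤ)
    (hcomm : x * y =
      y * x * (((-1 : Rˣ) ^ ((a.1 - a.2) * (b.1 - b.2)) * ε ^ (a.2 * b.2) : Rˣ) : R)) :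
    x * y * ((u ^ (a.2 * (b.1 - b.2)) : Rˣ) : R) =
      y * x * ((u ^ (b.2 * (a.1 - a.2)) : Rˣ) : R) *
        (((-1 : Rˣ) ^ (a.1 * b.1) * (-u) ^ (a.2 * b.1 - a.1 * b.2) *
          (-ε) ^ (a.2 * b.2) : Rˣ) : R) :=
  stmt_5_general ε u hεc huc x y a b hcomm
end

section
/- Let R be a (ℤ×ℤ)-graded ring with central unit ε, ε²=1, whose homogeneous elements satisfy x·y = y·x·(-1)^{(a₁-a₂)(b₁-b₂)}·ε^{a₂b₂}. Suppose moreover ε = -1 in R, and set u = -1. Then the twisted product x ·_u y = x·y·(-1)^{a₂(b₁-b₂)} satisfies x ·_u y = y ·_u x · (-1)^{a₁b₁}, i.e., graded commutativity with respect to the first (total) degree only. -/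
lemma neg_one_zpow_congr {G : Type*} [Group G] (g : G) (hg : g ^ (2:ℤ) = 1)
    (m n : ℤ) (h : m % 2 = n % 2) : g ^ m = g ^ n := by
  have hk : m = n + 2 * ((m - n) / 2) := by omega
  rw [hk, zpow_add, zpow_mul, hg, one_zpow, mul_one]

/-- When ε = -1 and u = -1, the twisted product x ·_u y = x·y·(-1)^(a₂(b₁-b₂)) is
graded commutative with respect to the first (total) degree:
x ·_u y = y ·_u x · (-1)^(a₁b₁). -/
theorem stmt_6 {R : Type*} [Ring R] (ε : Rˣ)
    (hεc : ∀ r : R, (ε : R) * r = r * (ε : R))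
    (hε2 : ε ^ 2 = 1) (hε : ε = -1)
    (x y : R) (a b : ℤ × ℤ)
    (hcomm : x * y =
      y * x * (((-1 : Rˣ) ^ ((a.1 - a.2) * (b.1 - b.2)) * ε ^ (a.2 * b.2) : Rˣ) : R)) :
    x * y * (((-1 : Rˣ) ^ (a.2 * (b.1 - b.2)) : Rˣ) : R) =
      y * x * (((-1 : Rˣ) ^ (b.2 * (a.1 - a.2)) : Rˣ) : R) *
        (((-1 : Rˣ) ^ (a.1 * b.1) : Rˣ) : R) := by
  subst hε
  rw [hcomm, mul_assoc, mul_assoc, mul_assoc, mul_assoc]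
  congr 1
  rw [← Units.val_mul, ← Units.val_mul]
  congr 1
  congr 1
  rw [← zpow_add, ← zpow_add, ← zpow_add]
  have h2 : ((-1 : Rˣ)) ^ (2:ℤ) = 1 := by rw [zpow_two]; simp
  apply neg_one_zpow_congr _ h2
  ring_nf
  omega
end

section
/- Two reduced 2-cocycles α, α' on ℤ×ℤ with values in an abelian group G differ by a coboundary if and only if the induced skew-symmetrizations agree: α(a,b)·α(b,a)⁻¹ = α'(a,b)·α'(b,a)⁻¹ for all a, b ∈ ℤ×ℤ. -/
/-!
The quotient `α / α'` of two cocycles is again a cocycle, and the skew-symmetrizations of `α`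
and `α'` agree exactly when `α / α'` is symmetric. So it suffices to show that a symmetric
cocycle `γ` on a free abelian group `A` is a coboundary. Such a `γ` defines an abelian central
extension `G → E → A`, namely `G × A` with `(g, a) (h, b) = (g h γ(a, b), a + b)`. As `A` is a
projective `ℤ`-module, the extension has a homomorphic section `σ(a) = (s(a), a)`, and comparing
the first coordinates of `σ(a + b) = σ(a) σ(b)` gives `γ(a, b) = s(a + b) s(a)⁻¹ s(b)⁻¹`.
-/

section Cocycle

variable {G A : Type*} [CommGroup G] [AddCommGroup A]

def IsCocycle (γ : A → A → G) : Prop :=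
  ∀ a b c : A, γ (a + b) c * γ a b = γ b c * γ a (b + c)

def coboundary (β : A → G) (a b : A) : G :=
  β a * β b * (β (a + b))⁻¹

theorem coboundary_comm (β : A → G) (a b : A) : coboundary β a b = coboundary β b a := by
  rw [coboundary, coboundary, mul_comm (β a), add_comm]

namespace IsCocycle

variable {γ : A → A → G}

theorem apply_zero_left (hγ : IsCocycle γ) (c : A) : γ 0 c = γ 0 0 := by
  simpa using (hγ 0 0 c).symm

theorem div {α α' : A → A → G} (hα : IsCocycle α) (hα' : IsCocycle α') :
    IsCocycle (α / α') := by
  intro a b c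
  simp only [Pi.div_apply, div_mul_div_comm, hα a b c, hα' a b c]

end IsCocycle

@[ext]
structure TwistedProd (γ : A → A → G) where
  fst : G
  snd : A

namespace TwistedProd

variable {γ : A → A → G}

instance : Mul (TwistedProd γ) where
  mul p q := ⟨p.fst * q.fst * γ p.snd q.snd, p.snd + q.snd⟩

-- `γ` need not be normalized; the cocycle identity gives `γ 0 c = γ 0 0` for all `c`.
instance : One (TwistedProd γ) where
  one := ⟨(γ 0 0)⁻¹, 0⟩

instance : Inv (TwistedProd γ) where
  inv p := ⟨(γ 0 0)⁻¹ * p.fst⁻¹ * (γ (-p.snd) p.snd)⁻¹, -p.snd⟩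

@[simp] theorem mul_fst (p q : TwistedProd γ) : (p * q).fst = p.fst * q.fst * γ p.snd q.snd := rfl
@[simp] theorem mul_snd (p q : TwistedProd γ) : (p * q).snd = p.snd + q.snd := rfl
@[simp] theorem one_fst : (1 : TwistedProd γ).fst = (γ 0 0)⁻¹ := rfl
@[simp] theorem one_snd : (1 : TwistedProd γ).snd = 0 := rfl
@[simp] theorem inv_fst (p : TwistedProd γ) :
    p⁻¹.fst = (γ 0 0)⁻¹ * p.fst⁻¹ * (γ (-p.snd) p.snd)⁻¹ := rfl
@[simp] theorem inv_snd (p : TwistedProd γ) : p⁻¹.snd = -p.snd := rfl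

abbrev commGroup (hγ : IsCocycle γ) (hs : ∀ a b, γ a b = γ b a) : CommGroup (TwistedProd γ) :=
  { Group.ofLeftAxioms
      (fun p q r => by
        ext
        · simp only [mul_fst, mul_snd]
          calc p.fst * q.fst * γ p.snd q.snd * r.fst * γ (p.snd + q.snd) r.snd
              = p.fst * q.fst * r.fst * (γ (p.snd + q.snd) r.snd * γ p.snd q.snd) := by ac_rfl
            _ = p.fst * q.fst * r.fst * (γ q.snd r.snd * γ p.snd (q.snd + r.snd)) := by rw [hγ]
            _ = p.fst * (q.fst * r.fst * γ q.snd r.snd) * γ p.snd (q.snd + r.snd) := by ac_rfl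
        · exact add_assoc _ _ _)
      (fun p => by ext <;> simp [hγ.apply_zero_left])
      (fun p => by ext <;> simp [mul_assoc]) with
    mul_comm := fun p q => by
      ext
      · simp only [mul_fst, hs p.snd, mul_comm p.fst]
      · exact add_comm _ _ }

end TwistedProd

theorem IsCocycle.exists_eq_coboundary_of_symm [Module.Projective ℤ A] {γ : A → A → G}
    (hγ : IsCocycle γ) (hs : ∀ a b, γ a b = γ b a) : ∃ β : A → G, γ = coboundary β := by
  let := TwistedProd.commGroup hγ hs
  let π : Additive (TwistedProd γ) →+ A :=
    { toFun := fun p => p.toMul.snd, map_zero' := rfl, map_add' := fun _ _ => rfl }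
  obtain ⟨σ, hσ⟩ := Module.projective_lifting_property π.toIntLinearMap LinearMap.id
    fun a => ⟨.ofMul ⟨1, a⟩, rfl⟩
  have hsnd (a : A) : (σ a).toMul.snd = a := LinearMap.congr_fun hσ a
  refine ⟨fun a => (σ a).toMul.fst⁻¹, funext₂ fun a b => ?_⟩
  have hfst : (σ (a + b)).toMul.fst = (σ a).toMul.fst * (σ b).toMul.fst * γ a b := by
    rw [map_add, toMul_add, TwistedProd.mul_fst, hsnd, hsnd]
  rw [coboundary, hfst, inv_inv, ← mul_inv, inv_mul_cancel_left]

end Cocycle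

theorem stmt_13_general {G : Type*} [CommGroup G] (α α' : ℤ × ℤ → ℤ × ℤ → G)
    (hα : ∀ a b c : ℤ × ℤ, α (a + b) c * α a b = α b c * α a (b + c))
    (hα' : ∀ a b c : ℤ × ℤ, α' (a + b) c * α' a b = α' b c * α' a (b + c)) :
    (∃ β : ℤ × ℤ → G, ∀ a b : ℤ × ℤ,
        α a b = α' a b * (β a * β b * (β (a + b))⁻¹)) ↔
      (∀ a b : ℤ × ℤ, α a b * (α b a)⁻¹ = α' a b * (α' b a)⁻¹) := by
  change (∃ β, ∀ a b, α a b = α' a b * coboundary β a b) ↔ _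
  have hquot (β : ℤ × ℤ → G) : (∀ a b, α a b = α' a b * coboundary β a b) ↔
      α / α' = coboundary β := by
    simp only [div_eq_iff_eq_mul', funext_iff, Pi.mul_apply]
  have hskew : (∀ a b, α a b * (α b a)⁻¹ = α' a b * (α' b a)⁻¹) ↔
      ∀ a b, (α / α') a b = (α / α') b a := by
    simp only [Pi.div_apply, ← div_eq_mul_inv, div_eq_div_iff_div_eq_div]
  rw [hskew]
  simp only [hquot]
  constructor
  · rintro ⟨β, hβ⟩ a b
    rw [congrFun₂ hβ a b, congrFun₂ hβ b a, coboundary_comm]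
  · exact (IsCocycle.div hα hα').exists_eq_coboundary_of_symm

/-- Two reduced 2-cocycles α, α' on ℤ×ℤ with values in an abelian group G differ
by a coboundary iff their skew-symmetrizations agree. -/
theorem stmt_13 {G : Type*} [CommGroup G] (α α' : ℤ × ℤ → ℤ × ℤ → G)
    (hα : ∀ a b c : ℤ × ℤ, α (a + b) c * α a b = α b c * α a (b + c))
    (hα' : ∀ a b c : ℤ × ℤ, α' (a + b) c * α' a b = α' b c * α' a (b + c))
    (hrα : α 0 0 = 1) (hrα' : α' 0 0 = 1) :
    (∃ β : ℤ × ℤ → G, ∀ a b : ℤ × ℤ,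
        α a b = α' a b * (β a * β b * (β (a + b))⁻¹)) ↔
      (∀ a b : ℤ × ℤ, α a b * (α b a)⁻¹ = α' a b * (α' b a)⁻¹) :=
  stmt_13_general α α' hα hα'
end
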